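/- Let k ≥ 2 and let y ∈ ℝ be a root of H_{k−1}. Then y is not a root of H_k, and Σ_{x ∈ roots(H_k)} 1/(x − y)² = k, where the sum runs over the k roots of H_k. -/

import Mathlib

/-
The recurrences `H_k' = k H_{k-1}` and `H_k = X H_{k-1} - (k-1) H_{k-2}` give, at a root `y` of
`H_{k-1}`, that `H_k'(y) = 0`, `H_k(y) = -(k-1) H_{k-2}(y)` and `H_k''(y) = k (k-1) H_{k-2}(y)`;
`H_{k-2}(y) ≠ 0` because consecutive Hermite polynomials have no common root. As `H_k` splits
over `ℝ`, `∑ 1/(x - y)² = -(H_k'/H_k)'(y) = (H_k'² - H_k H_k'')(y) / H_k(y)² = k`.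
That `H_k` splits follows by induction from Rolle's theorem for `H_n(x) e^{-x²/2}`, whose
derivative is `-H_{n+1}(x) e^{-x²/2}` and which vanishes at `±∞`: between and beyond the `n`
roots of `H_n` lie `n + 1` roots of `H_{n+1}`.
-/

noncomputable def hermiteR (k : ℕ) : Polynomial ℝ :=
  (Polynomial.hermite k).map (Int.castRingHom ℝ)

open Polynomial Filter Set Topology

theorem exists_hasDerivAt_eq_zero_Ioi {f f' : ℝ → ℝ} {a l : ℝ}
    (hf : ∀ x ∈ Ioi a, HasDerivAt f (f' x) x) (hfa : Tendsto f (𝓝[>] a) (𝓝 l))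
    (hf_top : Tendsto f atTop (𝓝 l)) : ∃ c ∈ Ioi a, f' c = 0 := by
  -- `t ↦ t⁻¹ + (a - 1)` maps `(0, 1)` onto `(a, ∞)`: apply Rolle's theorem on `(0, 1)`.
  set φ : ℝ → ℝ := fun t => t⁻¹ + (a - 1)
  have hφ_mem : ∀ t ∈ Ioo (0 : ℝ) 1, φ t ∈ Ioi a := fun t ht => by
    have : 1 < t⁻¹ := one_lt_inv₀ ht.1 |>.2 ht.2
    simp only [φ, mem_Ioi]
    linarith
  have hφ_zero : Tendsto φ (𝓝[>] 0) atTop :=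
    tendsto_atTop_add_const_right _ _ tendsto_inv_nhdsGT_zero
  have hφ_one : Tendsto φ (𝓝[<] 1) (𝓝[>] a) := by
    refine tendsto_nhdsWithin_iff.2 ⟨?_, ?_⟩
    · have hφ : ContinuousAt φ 1 := (continuousAt_id.inv₀ one_ne_zero).add continuousAt_const
      convert hφ.tendsto.mono_left nhdsWithin_le_nhds
      simp [φ]
    · filter_upwards [Ioo_mem_nhdsLT zero_lt_one] with t ht using hφ_mem t ht
  obtain ⟨c, hc, hc0⟩ := exists_hasDerivAt_eq_zero' zero_lt_one (hf_top.comp hφ_zero)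
    (hfa.comp hφ_one) fun t ht =>
      (hf _ (hφ_mem t ht)).comp t ((hasDerivAt_inv ht.1.ne').add_const (a - 1))
  exact ⟨φ c, hφ_mem c hc, by simpa [hc.1.ne'] using hc0⟩

theorem exists_hasDerivAt_eq_zero_Iio {f f' : ℝ → ℝ} {a l : ℝ}
    (hf : ∀ x ∈ Iio a, HasDerivAt f (f' x) x) (hfa : Tendsto f (𝓝[<] a) (𝓝 l))
    (hf_bot : Tendsto f atBot (𝓝 l)) : ∃ c ∈ Iio a, f' c = 0 := by
  obtain ⟨c, hc, hc0⟩ := exists_hasDerivAt_eq_zero_Ioi (f := fun x => f (-x))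
    (f' := fun x => -f' (-x)) (a := -a)
    (fun x hx => by
      simpa [Function.comp_def] using
        (hf (-x) (mem_Iio.2 (neg_lt.1 hx))).comp x (hasDerivAt_neg x))
    (hfa.comp tendsto_neg_nhdsGT_neg) (hf_bot.comp tendsto_neg_atTop_atBot)
  exact ⟨-c, mem_Iio.2 (neg_lt.1 hc), by simpa using hc0⟩

theorem card_lt_card_of_hasDerivAt_of_tendsto_cocompact {f f' : ℝ → ℝ}
    (hf : ∀ x, HasDerivAt f (f' x) x) (hf_lim : Tendsto f (cocompact ℝ) (𝓝 0))
    {s t : Finset ℝ} (hs : s.Nonempty) (hs0 : ∀ x ∈ s, f x = 0)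
    (ht : ∀ x, f' x = 0 → x ∈ t) : s.card < t.card := by
  set a := s.min' hs
  set b := s.max' hs
  have hcont : Continuous f := continuous_iff_continuousAt.2 fun x => (hf x).continuousAt
  have hf_nhds : ∀ x ∈ s, Tendsto f (𝓝 x) (𝓝 0) := fun x hx =>
    hs0 x hx ▸ hcont.tendsto x
  obtain ⟨c, hca, hc⟩ := exists_hasDerivAt_eq_zero_Iio (fun x _ => hf x)
    ((hf_nhds a (s.min'_mem hs)).mono_left nhdsWithin_le_nhds)
    (hf_lim.mono_left atBot_le_cocompact)
  obtain ⟨d, hbd, hd⟩ := exists_hasDerivAt_eq_zero_Ioi (fun x _ => hf x)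
    ((hf_nhds b (s.max'_mem hs)).mono_left nhdsWithin_le_nhds)
    (hf_lim.mono_left atTop_le_cocompact)
  -- Rolle between consecutive points of `s` gives `s.card - 1` critical points in `(a, b)`;
  -- the tails beyond `a` and `b` give one more each.
  set u := t.filter (· ∈ Ioo a b)
  have hsu : s.card ≤ u.card + 1 := Finset.card_le_of_interleaved fun x hx y hy hxy _ => by
    obtain ⟨z, hz, hz0⟩ := exists_hasDerivAt_eq_zero hxy hcont.continuousOn
      ((hs0 x hx).trans (hs0 y hy).symm) fun z _ => hf z
    exact ⟨z, Finset.mem_filter.2 ⟨ht z hz0, (s.min'_le x hx).trans_lt hz.1,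
      hz.2.trans_le (s.le_max' y hy)⟩, hz.1, hz.2⟩
  have hab : a ≤ b := s.min'_le_max' hs
  have hcu : c ∉ u := fun h => (Finset.mem_filter.1 h).2.1.not_gt hca
  have hdu : d ∉ u := fun h => (Finset.mem_filter.1 h).2.2.not_gt hbd
  have hcd : c ∉ insert d u := by
    rw [Finset.mem_insert, not_or]
    exact ⟨(hca.trans (hab.trans_lt hbd)).ne, hcu⟩
  calc s.card < (insert c (insert d u)).card := by
        rw [Finset.card_insert_of_notMem hcd, Finset.card_insert_of_notMem hdu]
        omega
    _ ≤ t.card :=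
        Finset.card_le_card (Finset.insert_subset (ht c hc)
          (Finset.insert_subset (ht d hd) (Finset.filter_subset _ _)))

theorem tendsto_eval_mul_exp_neg_sq_div_two_cocompact (p : ℝ[X]) :
    Tendsto (fun x => p.eval x * Real.exp (-(x ^ 2 / 2))) (cocompact ℝ) (𝓝 0) := by
  induction p using Polynomial.induction_on' with
  | add p q hp hq => simpa [add_mul] using hp.add hq
  | monomial n c =>
    have h := (tendsto_rpow_abs_mul_exp_neg_mul_sq_cocompact one_half_pos (n : ℝ)).const_mul |c|
    rw [mul_zero] at h
    refine tendsto_zero_iff_norm_tendsto_zero.2 (h.congr fun x => ?_)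
    rw [eval_monomial, Real.norm_eq_abs, abs_mul, abs_mul, abs_of_pos (Real.exp_pos _), abs_pow,
      Real.rpow_natCast]
    ring_nf

theorem eval_derivative_sq_sub_eval_mul_eval_derivative_derivative_multiset_prod {K : Type*}
    [Field K] (s : Multiset K) {y : K} (hy : y ∉ s) :
    (derivative (s.map fun x => X - C x).prod).eval y ^ 2 -
        (s.map fun x => X - C x).prod.eval y *
          (derivative (derivative (s.map fun x => X - C x).prod)).eval y =
      (s.map fun x => X - C x).prod.eval y ^ 2 * (s.map fun x => 1 / (x - y) ^ 2).sum := by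
  induction s using Multiset.induction_on with
  | empty => simp
  | cons a s ih =>
    rw [Multiset.mem_cons, not_or] at hy
    simp only [Multiset.map_cons, Multiset.prod_cons, Multiset.sum_cons]
    set q := (s.map fun x => X - C x).prod
    have hq : derivative ((X - C a) * q) = q + (X - C a) * derivative q := by
      simp [derivative_mul]
    have hq' : derivative (derivative ((X - C a) * q)) =
        2 * derivative q + (X - C a) * derivative (derivative q) := by
      rw [hq]
      simp only [derivative_add, derivative_mul, derivative_sub, derivative_X, derivative_C]
      ring
    have hinv : (y - a) ^ 2 * (1 / (a - y) ^ 2) = 1 := by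
      have : a - y ≠ 0 := sub_ne_zero.2 (Ne.symm hy.1)
      field_simp
      ring
    rw [hq', hq]
    simp only [eval_mul, eval_add, eval_sub, eval_X, eval_C, eval_ofNat]
    linear_combination (y - a) ^ 2 * ih hy.2 - q.eval y ^ 2 * hinv

theorem eval_derivative_sq_sub_eval_mul_eval_derivative_derivative {K : Type*} [Field K]
    {p : K[X]} (hp : p.Monic) (hroots : Multiset.card p.roots = p.natDegree) {y : K}
    (hy : ¬ p.IsRoot y) :
    p.derivative.eval y ^ 2 - p.eval y * p.derivative.derivative.eval y =
      p.eval y ^ 2 * (p.roots.map fun x => 1 / (x - y) ^ 2).sum := by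
  have h := eval_derivative_sq_sub_eval_mul_eval_derivative_derivative_multiset_prod p.roots
    (y := y) fun h => hy ((mem_roots hp.ne_zero).1 h)
  rwa [prod_multiset_X_sub_C_of_monic_of_roots_card_eq hp hroots] at h

namespace Polynomial

theorem derivative_hermite_succ (n : ℕ) :
    derivative (hermite (n + 1)) = ((n + 1 : ℕ) : ℤ[X]) * hermite n := by
  induction n with
  | zero => simp
  | succ n ih =>
    rw [hermite_succ (n + 1), derivative_sub, derivative_mul, derivative_X, ih,
      derivative_natCast_mul, hermite_succ n]
    push_cast
    ring

theorem hermite_succ_succ (n : ℕ) :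
    hermite (n + 2) = X * hermite (n + 1) - ((n + 1 : ℕ) : ℤ[X]) * hermite n := by
  rw [hermite_succ (n + 1), derivative_hermite_succ]

end Polynomial

theorem hermiteR_zero : hermiteR 0 = 1 := by
  simp [hermiteR]

theorem hermiteR_one : hermiteR 1 = X := by
  simp [hermiteR]

theorem hermiteR_succ (n : ℕ) : hermiteR (n + 1) = X * hermiteR n - derivative (hermiteR n) := by
  simp [hermiteR, hermite_succ, derivative_map]

theorem hermiteR_succ_succ (n : ℕ) :
    hermiteR (n + 2) = X * hermiteR (n + 1) - ((n + 1 : ℕ) : ℝ[X]) * hermiteR n := by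
  simp only [hermiteR, hermite_succ_succ, Polynomial.map_sub, Polynomial.map_mul,
    Polynomial.map_X, Polynomial.map_natCast]

theorem derivative_hermiteR_succ (n : ℕ) :
    derivative (hermiteR (n + 1)) = ((n + 1 : ℕ) : ℝ[X]) * hermiteR n := by
  rw [hermiteR, derivative_map, derivative_hermite_succ, Polynomial.map_mul,
    Polynomial.map_natCast, hermiteR]

theorem hermiteR_monic (n : ℕ) : (hermiteR n).Monic :=
  (hermite_monic n).map _

theorem natDegree_hermiteR (n : ℕ) : (hermiteR n).natDegree = n := by
  rw [hermiteR, natDegree_map_eq_of_injective Int.cast_injective, natDegree_hermite]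

theorem eval_hermiteR_ne_zero_of_isRoot_succ {n : ℕ} {y : ℝ}
    (hy : (hermiteR (n + 1)).IsRoot y) : (hermiteR n).eval y ≠ 0 := by
  induction n with
  | zero => simp [hermiteR_zero]
  | succ n ih =>
    intro hy'
    have h := congrArg (eval y) (hermiteR_succ_succ n)
    simp only [eval_sub, eval_mul, eval_X, eval_natCast, hy', hy.eq_zero, mul_zero] at h
    exact ih hy' (by simpa [n.cast_add_one_ne_zero] using h.symm)

theorem hasDerivAt_eval_hermiteR_mul_exp (n : ℕ) (x : ℝ) :
    HasDerivAt (fun x => (hermiteR n).eval x * Real.exp (-(x ^ 2 / 2)))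
      (-((hermiteR (n + 1)).eval x * Real.exp (-(x ^ 2 / 2)))) x := by
  have hexp : HasDerivAt (fun x : ℝ => Real.exp (-(x ^ 2 / 2)))
      (Real.exp (-(x ^ 2 / 2)) * -x) x := by
    simpa using (((hasDerivAt_pow 2 x).div_const 2).neg).exp
  refine (((hermiteR n).hasDerivAt x).mul hexp).congr_deriv ?_
  rw [hermiteR_succ, eval_sub, eval_mul, eval_X]
  ring

theorem card_roots_toFinset_hermiteR_succ (n : ℕ) :
    (hermiteR (n + 1)).roots.toFinset.card = n + 1 := by
  induction n with
  | zero => simp [hermiteR_one]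
  | succ n ih =>
    have hroot : ∀ m x, x ∈ (hermiteR m).roots.toFinset ↔ (hermiteR m).eval x = 0 :=
      fun m x => by rw [Multiset.mem_toFinset, mem_roots (hermiteR_monic m).ne_zero, IsRoot.def]
    have hlt := card_lt_card_of_hasDerivAt_of_tendsto_cocompact
      (hasDerivAt_eval_hermiteR_mul_exp (n + 1))
      (tendsto_eval_mul_exp_neg_sq_div_two_cocompact _)
      (s := (hermiteR (n + 1)).roots.toFinset) (t := (hermiteR (n + 1 + 1)).roots.toFinset)
      (Finset.card_pos.1 (by omega))
      (fun x hx => by rw [(hroot _ x).1 hx, zero_mul])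
      (fun x hx => (hroot _ x).2 (by simpa [Real.exp_ne_zero] using hx))
    have hle : (hermiteR (n + 1 + 1)).roots.toFinset.card ≤ n + 1 + 1 :=
      (Multiset.toFinset_card_le _).trans ((card_roots' _).trans (natDegree_hermiteR _).le)
    omega

theorem card_roots_hermiteR (n : ℕ) : Multiset.card (hermiteR n).roots = n := by
  cases n with
  | zero => simp [hermiteR_zero]
  | succ n =>
    have := card_roots_toFinset_hermiteR_succ n
    have := Multiset.toFinset_card_le (hermiteR (n + 1)).roots
    have := (card_roots' (hermiteR (n + 1))).trans (natDegree_hermiteR _).le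
    omega

theorem stmt4 (k : ℕ) (hk : 2 ≤ k) (y : ℝ) (hy : (hermiteR (k - 1)).IsRoot y) :
    ¬ (hermiteR k).IsRoot y ∧
      ((hermiteR k).roots.map (fun x => 1 / (x - y) ^ 2)).sum = (k : ℝ) := by
  obtain ⟨m, rfl⟩ : ∃ m, k = m + 2 := ⟨k - 2, by omega⟩
  replace hy : (hermiteR (m + 1)).IsRoot y := hy
  have hE : (hermiteR m).eval y ≠ 0 := eval_hermiteR_ne_zero_of_isRoot_succ hy
  have hP : (hermiteR (m + 2)).eval y = -((m + 1) * (hermiteR m).eval y) := by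
    simp [hermiteR_succ_succ, hy.eq_zero]
  have hP' : (derivative (hermiteR (m + 2))).eval y = 0 := by
    simp [derivative_hermiteR_succ, hy.eq_zero]
  have hP'' : (derivative (derivative (hermiteR (m + 2)))).eval y =
      (m + 2) * (m + 1) * (hermiteR m).eval y := by
    rw [derivative_hermiteR_succ, derivative_natCast_mul, derivative_hermiteR_succ]
    simp only [eval_mul, eval_natCast]
    push_cast
    ring
  have hnot : ¬ (hermiteR (m + 2)).IsRoot y := by
    rw [IsRoot.def, hP]
    exact neg_ne_zero.2 (mul_ne_zero m.cast_add_one_ne_zero hE)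
  refine ⟨hnot, ?_⟩
  have h := eval_derivative_sq_sub_eval_mul_eval_derivative_derivative (hermiteR_monic (m + 2))
    (by rw [card_roots_hermiteR, natDegree_hermiteR]) hnot
  rw [hP, hP', hP''] at h
  have hc : ((m : ℝ) + 1) ^ 2 * (hermiteR m).eval y ^ 2 ≠ 0 :=
    mul_ne_zero (pow_ne_zero 2 m.cast_add_one_ne_zero) (pow_ne_zero 2 hE)
  push_cast
  exact mul_left_cancel₀ hc (by linear_combination -h)
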